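/- arXiv:2007.07454 — 3 statements merged into one kernel-verified Lean document; each statement's English description precedes it below -/
import Mathlib

section
/- Let R be a commutative ring and let R' be an R-module for which there exists an exact sequence 0 → P₂ → P₁ → R' → 0 of R-modules in which P₁ and P₂ are finitely generated projective. Then for every R-module N, the natural map Hom_R(N, R) ⊗_R R' → Hom_R(N, R'), sending f ⊗ x to the homomorphism n ↦ f(n) • x, is injective. -/
open TensorProduct LinearMap

section Aux
variable (R : Type*) [CommRing R] (N : Type*) [AddCommGroup N] [Module R N]

lemma aux_dualTensorHom_bijective (P : Type*) [AddCommGroup P] [Module R P]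
    [Module.Finite R P] [Module.Projective R P] :
    Function.Bijective (dualTensorHom R N P) := by
  obtain ⟨k, π, hπ⟩ := Module.Finite.exists_fin' R P
  obtain ⟨i, hi⟩ := Module.projective_lifting_property π LinearMap.id hπ
  have hi' : ∀ x : P, π (i x) = x := fun x => congrArg (· x) (congrArg DFunLike.coe hi)
  set e : Fin k → P := fun j => π (Pi.single j 1) with he
  have key : ∀ x : P, ∑ j, (i x j) • e j = x := by
    intro x
    have h1 : ∀ j, (i x j) • e j = π (Pi.single j (i x j)) := by
      intro j
      rw [he, ← map_smul]
      congr 1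
      ext m
      by_cases h : j = m <;> simp [Pi.single_apply, h]
    simp_rw [h1, ← map_sum, Finset.univ_sum_single, hi']
  set β : (N →ₗ[R] P) →ₗ[R] Module.Dual R N ⊗[R] P :=
    ∑ j, (TensorProduct.mk R (Module.Dual R N) P).flip (e j) ∘ₗ
      llcomp R N P R (LinearMap.proj j ∘ₗ i) with hβ
  have hβ_apply : ∀ φ : N →ₗ[R] P,
      β φ = ∑ j, ((LinearMap.proj j ∘ₗ i) ∘ₗ φ) ⊗ₜ[R] e j := by
    intro φ
    rw [hβ]
    simp only [LinearMap.sum_apply, coe_comp, Function.comp_apply, llcomp_apply,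
      TensorProduct.mk_apply, LinearMap.flip_apply]
    rfl
  have left : Function.LeftInverse β (dualTensorHom R N P) := by
    intro t
    induction t using TensorProduct.induction_on with
    | zero => simp
    | tmul f p =>
      rw [hβ_apply]
      have h2 : ∀ j, (LinearMap.proj j ∘ₗ i) ∘ₗ (dualTensorHom R N P (f ⊗ₜ p))
          = (i p j) • f := by
        intro j
        ext n
        simp [mul_comm]
      simp_rw [h2, smul_tmul, ← tmul_sum, key]
    | add x y hx hy => rw [map_add, map_add, hx, hy]
  constructor
  · exact left.injective
  · intro φ
    refine ⟨β φ, ?_⟩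
    ext n
    rw [hβ_apply]
    rw [map_sum]
    simp only [LinearMap.sum_apply, dualTensorHom_apply, coe_comp, Function.comp_apply,
      LinearMap.proj_apply]
    exact key (φ n)

lemma aux_nat {P Q : Type*} [AddCommGroup P] [Module R P] [AddCommGroup Q] [Module R Q]
    (u : P →ₗ[R] Q) (t : Module.Dual R N ⊗[R] P) :
    u ∘ₗ dualTensorHom R N P t = dualTensorHom R N Q (lTensor (Module.Dual R N) u t) := by
  induction t using TensorProduct.induction_on with
  | zero => simp
  | tmul f p => ext n; simp
  | add x y hx hy => simp [map_add, hx, hy, LinearMap.comp_add]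

end Aux

/-- Let `R` be a commutative ring and `R'` an `R`-module admitting a resolution
`0 → P₂ → P₁ → R' → 0` with `P₁, P₂` finitely generated projective.  Then for every `R`-module
`N` the natural map `Hom_R(N, R) ⊗_R R' → Hom_R(N, R')`, `f ⊗ x ↦ (n ↦ f n • x)`, is
injective. -/
theorem statement1 (R : Type*) [CommRing R]
    (R' : Type*) [AddCommGroup R'] [Module R R']
    (P₁ P₂ : Type*) [AddCommGroup P₁] [Module R P₁] [AddCommGroup P₂] [Module R P₂]
    [Module.Finite R P₁] [Module.Projective R P₁]
    [Module.Finite R P₂] [Module.Projective R P₂]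
    (f : P₂ →ₗ[R] P₁) (g : P₁ →ₗ[R] R')
    (hf : Function.Injective f) (hg : Function.Surjective g)
    (hfg : Function.Exact f g)
    (N : Type*) [AddCommGroup N] [Module R N] :
    Function.Injective (dualTensorHom R N R') := by
  rw [injective_iff_map_eq_zero]
  intro t ht
  obtain ⟨s, rfl⟩ := LinearMap.lTensor_surjective (Module.Dual R N) hg t
  -- g ∘ₗ dualTensorHom s = 0
  have hcomp : g ∘ₗ dualTensorHom R N P₁ s = 0 := by
    rw [aux_nat, ht]
  have hmem : ∀ n, dualTensorHom R N P₁ s n ∈ LinearMap.range f := by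
    intro n
    rw [← hfg.linearMap_ker_eq]
    have : (g ∘ₗ dualTensorHom R N P₁ s) n = 0 := by rw [hcomp]; rfl
    simpa using this
  set h : N →ₗ[R] P₂ :=
    (LinearEquiv.ofInjective f hf).symm.toLinearMap ∘ₗ
      LinearMap.codRestrict (LinearMap.range f) (dualTensorHom R N P₁ s) hmem with hh
  have hfh : f ∘ₗ h = dualTensorHom R N P₁ s := by
    ext n
    rw [hh]
    simp only [coe_comp, Function.comp_apply, LinearEquiv.coe_coe]
    have := (LinearEquiv.ofInjective f hf).apply_symm_apply
      ⟨dualTensorHom R N P₁ s n, hmem n⟩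
    have h2 : ∀ x : P₂, ((LinearEquiv.ofInjective f hf) x : P₁) = f x := fun x => rfl
    calc f ((LinearEquiv.ofInjective f hf).symm
        ⟨dualTensorHom R N P₁ s n, hmem n⟩)
        = ((LinearEquiv.ofInjective f hf) ((LinearEquiv.ofInjective f hf).symm
          ⟨dualTensorHom R N P₁ s n, hmem n⟩) : P₁) := (h2 _).symm
      _ = dualTensorHom R N P₁ s n := by rw [this]
  obtain ⟨u, hu⟩ := (aux_dualTensorHom_bijective R N P₂).surjective h
  have hs : lTensor (Module.Dual R N) f u = s := by
    apply (aux_dualTensorHom_bijective R N P₁).injective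
    rw [← aux_nat, hu, hfh]
  rw [← hs, ← lTensor_comp_apply]
  have hgf : g ∘ₗ f = 0 := by
    ext x
    simpa using hfg.apply_apply_eq_zero x
  rw [hgf, lTensor_zero, LinearMap.zero_apply]
end

section
/- Let R be a commutative Noetherian ring and let R' be an R-module for which there exists an exact sequence 0 → P₂ → P₁ → R' → 0 of R-modules in which P₁ and P₂ are finitely generated projective. Let M be a finitely generated R-module such that the abelian group Ext¹_R(M, R) vanishes. Then the natural map Hom_R(M, R) ⊗_R R' → Hom_R(M, R'), sending f ⊗ x to the homomorphism m ↦ f(m) • x, is bijective. -/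
open TensorProduct CategoryTheory

universe u

/-!
Compute `Ext¹(M, -)` with a projective resolution `F → M`. The vanishing of `Ext¹(M, R)` says
that every `1`-cocycle `F₁ → R` is a coboundary; this property passes to products and retracts,
hence to the finite projective module `P₂`. A diagram chase in the resolution then lifts every map
`M → R'` along `P₁ → R'`, so `Hom(M, P₂) → Hom(M, P₁) → Hom(M, R') → 0` is exact. Since
`Hom(M, R) ⊗ N → Hom(M, N)` is bijective for finite projective `N` and `Hom(M, R) ⊗ -` is right
exact, the five lemma gives bijectivity for `R'`.
-/

section Exact

variable {R : Type*} [Ring R] {M N P Q : Type*} [AddCommGroup M] [Module R M]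
  [AddCommGroup N] [Module R N] [AddCommGroup P] [Module R P] [AddCommGroup Q] [Module R Q]
  {f : M →ₗ[R] N} {g : N →ₗ[R] P}

theorem Function.Exact.exists_comp_eq_of_injective (hfg : Function.Exact f g)
    (hf : Function.Injective f) {φ : Q →ₗ[R] N} (hφ : g ∘ₗ φ = 0) :
    ∃ ψ : Q →ₗ[R] M, f ∘ₗ ψ = φ := by
  have hrange (q : Q) : φ q ∈ LinearMap.range f := (hfg _).1 congr($hφ q)
  refine ⟨(LinearEquiv.ofInjective f hf).symm.toLinearMap ∘ₗ φ.codRestrict _ hrange, ?_⟩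
  ext q
  simp [LinearEquiv.ofInjective_symm_apply]

theorem Function.Exact.exists_comp_eq_of_surjective (hfg : Function.Exact f g)
    (hg : Function.Surjective g) {α : N →ₗ[R] Q} (hα : α ∘ₗ f = 0) :
    ∃ θ : P →ₗ[R] Q, θ ∘ₗ g = α := by
  refine ⟨(LinearMap.range f).liftQ α (LinearMap.range_le_ker_iff.2 hα) ∘ₗ
    (hfg.linearEquivOfSurjective hg).symm.toLinearMap, ?_⟩
  ext x
  simp

end Exact

theorem Function.Exact.compRight_of_injective {R : Type*} [CommRing R]
    {M N P Q : Type*} [AddCommGroup M] [Module R M]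
    [AddCommGroup N] [Module R N] [AddCommGroup P] [Module R P] [AddCommGroup Q] [Module R Q]
    {f : M →ₗ[R] N} {g : N →ₗ[R] P} (hfg : Function.Exact f g) (hf : Function.Injective f) :
    Function.Exact (f.compRight R (M := Q)) (g.compRight R) := by
  intro φ
  constructor
  · exact hfg.exists_comp_eq_of_injective hf
  · rintro ⟨ψ, rfl⟩
    change g ∘ₗ f ∘ₗ ψ = 0
    rw [← LinearMap.comp_assoc, hfg.linearMap_comp_eq_zero, LinearMap.zero_comp]

namespace CategoryTheory.ProjectiveResolution

variable {R : Type u} [CommRing R] {X : ModuleCat.{u} R} (P : ProjectiveResolution X)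

/-- `Ext¹(X, N) = 0`, computed with the resolution `P`; phrased with linear maps so that `N` may
live in any universe. -/
def ExtOneTrivial (N : Type*) [AddCommGroup N] [Module R N] : Prop :=
  ∀ φ : P.complex.X 1 →ₗ[R] N, φ ∘ₗ (P.complex.d 2 1).hom = 0 →
    ∃ ψ : P.complex.X 0 →ₗ[R] N, ψ ∘ₗ (P.complex.d 1 0).hom = φ

theorem extOneTrivial_of_subsingleton_ext {Y : ModuleCat.{u} R}
    (hY : Subsingleton (((Ext R (ModuleCat.{u} R) 1).obj (Opposite.op X)).obj Y)) :
    P.ExtOneTrivial Y := by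
  set K := P.complex.linearYonedaObj R Y
  have hK : (K.sc' 0 1 2).Exact := by
    rw [← HomologicalComplex.exactAt_iff' K 0 1 2 (by simp) (by simp),
      HomologicalComplex.exactAt_iff_isZero_homology]
    exact (ModuleCat.isZero_of_subsingleton _).of_iso (P.isoExt 1 Y).symm
  intro φ hφ
  obtain ⟨ψ, hψ⟩ := (ShortComplex.moduleCat_exact_iff _).1 hK (ModuleCat.ofHom φ)
    (ModuleCat.hom_ext hφ)
  exact ⟨ψ.hom, congr(ModuleCat.Hom.hom $hψ)⟩

variable {P}

theorem ExtOneTrivial.pi {ι : Type*} {N : ι → Type*} [∀ i, AddCommGroup (N i)]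
    [∀ i, Module R (N i)] (h : ∀ i, P.ExtOneTrivial (N i)) : P.ExtOneTrivial (∀ i, N i) := by
  intro φ hφ
  choose ψ hψ using fun i ↦ h i (LinearMap.proj i ∘ₗ φ) (by rw [LinearMap.comp_assoc, hφ]; rfl)
  exact ⟨LinearMap.pi ψ, by ext x i; exact congr($(hψ i) x)⟩

theorem ExtOneTrivial.of_comp_eq_id {N N' : Type*} [AddCommGroup N] [Module R N]
    [AddCommGroup N'] [Module R N'] (h : P.ExtOneTrivial N') (s : N →ₗ[R] N') (p : N' →ₗ[R] N)
    (hps : p ∘ₗ s = .id) : P.ExtOneTrivial N := by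
  intro φ hφ
  obtain ⟨ψ, hψ⟩ := h (s ∘ₗ φ) (by rw [LinearMap.comp_assoc, hφ, LinearMap.comp_zero])
  refine ⟨p ∘ₗ ψ, ?_⟩
  rw [LinearMap.comp_assoc, hψ, ← LinearMap.comp_assoc, hps, LinearMap.id_comp]

theorem ExtOneTrivial.of_finite_projective (h : P.ExtOneTrivial R) (N : Type*) [AddCommGroup N]
    [Module R N] [Module.Finite R N] [Module.Projective R N] : P.ExtOneTrivial N :=
  have ⟨_, p, s, _, _, hps⟩ := Module.Finite.exists_comp_eq_id_of_projective R N
  (ExtOneTrivial.pi fun _ ↦ h).of_comp_eq_id s p hps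

theorem exact_d_π_zero :
    Function.Exact (P.complex.d 1 0).hom (P.π.f 0 : P.complex.X 0 ⟶ X).hom :=
  (ShortComplex.ShortExact.moduleCat_exact_iff_function_exact _).1
    (ShortComplex.exact_of_g_is_cokernel (.mk _ _ P.complex_d_comp_π_f_zero)
      P.isColimitCokernelCofork)

theorem ExtOneTrivial.surjective_compRight {N₁ N₂ N₃ : Type*} [AddCommGroup N₁] [Module R N₁]
    [AddCommGroup N₂] [Module R N₂] [AddCommGroup N₃] [Module R N₃]
    (h : P.ExtOneTrivial N₁) {f : N₁ →ₗ[R] N₂} {g : N₂ →ₗ[R] N₃} (hf : Function.Injective f)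
    (hg : Function.Surjective g) (hfg : Function.Exact f g) :
    Function.Surjective (g.compRight R (M := X)) := by
  intro φ
  set d₁ := (P.complex.d 1 0).hom
  set ε : P.complex.X 0 →ₗ[R] X := (P.π.f 0).hom
  have hε : Function.Surjective ε := (ModuleCat.epi_iff_surjective _).1 inferInstance
  have hdε : Function.Exact d₁ ε := P.exact_d_π_zero
  have hd_comp_d : d₁ ∘ₗ (P.complex.d 2 1).hom = 0 :=
    congr(ModuleCat.Hom.hom $(P.complex.d_comp_d 2 1 0))
  -- Lift `φ ∘ ε` to `α`; then `α ∘ d₁ = f ∘ β` for a cocycle `β = ψ ∘ d₁`, and `α - f ∘ ψ`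
  -- descends along `ε`.
  obtain ⟨α, hα⟩ := Module.projective_lifting_property g (φ ∘ₗ ε) hg
  obtain ⟨β, hβ⟩ := hfg.exists_comp_eq_of_injective hf (φ := α ∘ₗ d₁) (by
    rw [← LinearMap.comp_assoc, hα, LinearMap.comp_assoc, hdε.linearMap_comp_eq_zero,
      LinearMap.comp_zero])
  obtain ⟨ψ, hψ⟩ := h β <| (LinearMap.cancel_left hf).1 <| by
    rw [← LinearMap.comp_assoc, hβ, LinearMap.comp_assoc, hd_comp_d, LinearMap.comp_zero,
      LinearMap.comp_zero]
  obtain ⟨θ, hθ⟩ := hdε.exists_comp_eq_of_surjective hε (α := α - f ∘ₗ ψ) (by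
    rw [LinearMap.sub_comp, LinearMap.comp_assoc, hψ, hβ, sub_self])
  refine ⟨θ, (LinearMap.cancel_right hε).1 ?_⟩
  change g ∘ₗ θ ∘ₗ ε = φ ∘ₗ ε
  rw [hθ, LinearMap.comp_sub, hα, ← LinearMap.comp_assoc, hfg.linearMap_comp_eq_zero,
    LinearMap.zero_comp, sub_zero]

end CategoryTheory.ProjectiveResolution

theorem statement2_general (R : Type u) [CommRing R]
    (R' : Type*) [AddCommGroup R'] [Module R R']
    (P₁ P₂ : Type*) [AddCommGroup P₁] [Module R P₁] [AddCommGroup P₂] [Module R P₂]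
    [Module.Finite R P₁] [Module.Projective R P₁]
    [Module.Finite R P₂] [Module.Projective R P₂]
    (f : P₂ →ₗ[R] P₁) (g : P₁ →ₗ[R] R')
    (hf : Function.Injective f) (hg : Function.Surjective g)
    (hfg : Function.Exact f g)
    (M : Type u) [AddCommGroup M] [Module R M]
    (hExt : Subsingleton
      (((_root_.Ext R (ModuleCat.{u} R) 1).obj
        (Opposite.op (ModuleCat.of R M))).obj (ModuleCat.of R R))) :
    Function.Bijective (dualTensorHom R M R') := by
  obtain ⟨P⟩ := HasProjectiveResolution.out (Z := ModuleCat.of R M)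
  have hP₂ : P.ExtOneTrivial P₂ :=
    (P.extOneTrivial_of_subsingleton_ext hExt).of_finite_projective P₂
  exact LinearMap.bijective_of_surjective_of_bijective_of_right_exact
    (M₁ := Module.Dual R M ⊗[R] P₂) (M₂ := Module.Dual R M ⊗[R] P₁) (M₃ := Module.Dual R M ⊗[R] R')
    (f.lTensor _) (g.lTensor _) (f.compRight R) (g.compRight R)
    (dualTensorHom R M P₂) (dualTensorHom R M P₁) (dualTensorHom R M R')
    (dualTensorHom_comp_lTensor f).symm (dualTensorHom_comp_lTensor g).symm
    (lTensor_exact _ hfg hg) (hfg.compRight_of_injective hf)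
    dualTensorHom_bijective_of_finite_projective_right.2
    dualTensorHom_bijective_of_finite_projective_right
    (LinearMap.lTensor_surjective _ hg) (hP₂.surjective_compRight hf hg hfg)

/-- Let `R` be a commutative Noetherian ring and `R'` an `R`-module admitting a
resolution `0 → P₂ → P₁ → R' → 0` with `P₁, P₂` finitely generated projective.  If `M` is a
finitely generated `R`-module with `Ext¹_R(M, R) = 0`, then the natural map
`Hom_R(M, R) ⊗_R R' → Hom_R(M, R')`, `f ⊗ x ↦ (m ↦ f m • x)`, is bijective. -/
theorem statement2 (R : Type u) [CommRing R] [IsNoetherianRing R]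
    (R' : Type*) [AddCommGroup R'] [Module R R']
    (P₁ P₂ : Type*) [AddCommGroup P₁] [Module R P₁] [AddCommGroup P₂] [Module R P₂]
    [Module.Finite R P₁] [Module.Projective R P₁]
    [Module.Finite R P₂] [Module.Projective R P₂]
    (f : P₂ →ₗ[R] P₁) (g : P₁ →ₗ[R] R')
    (hf : Function.Injective f) (hg : Function.Surjective g)
    (hfg : Function.Exact f g)
    (M : Type u) [AddCommGroup M] [Module R M] [Module.Finite R M]
    (hExt : Subsingleton
      (((_root_.Ext R (ModuleCat.{u} R) 1).obj
        (Opposite.op (ModuleCat.of R M))).obj (ModuleCat.of R R))) :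
    Function.Bijective (dualTensorHom R M R') :=
  statement2_general R R' P₁ P₂ f g hf hg hfg M hExt
end

section
/- Let R be a commutative ring and G a finite group. If M is a module over the group ring R[G] whose underlying R-module (by restriction of scalars) is projective, then Ext¹_{R[G]}(M, R[G]) = 0. -/
/-!
For finite `G`, the group ring `A = R[G]` is a Frobenius `R`-algebra: with `ε` the coefficient
at `1`, the map `a ↦ (b ↦ ε (b * a))` is an isomorphism of `A`-modules from `A` onto the
coinduced module `Hom_R(A, R)`. Restriction of scalars from `A` to `R` is exact, preserves
projectives (as `A` is `R`-projective) and is left adjoint to coinduction, so restricting a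
projective resolution of `M` gives `Ext¹_A(M, A) ≅ Ext¹_A(M, Hom_R(A, R)) ≅ Ext¹_R(M, R)`,
which vanishes because `M` is `R`-projective.
-/

open CategoryTheory

universe v

theorem Module.Projective.trans (R A N : Type*) [CommRing R] [Ring A] [Algebra R A]
    [Module.Projective R A] [AddCommGroup N] [Module A N] [Module R N] [IsScalarTower R A N]
    [Module.Projective A N] : Module.Projective R N := by
  classical
  obtain ⟨s, hs⟩ := Module.projective_def'.mp ‹Module.Projective A N›
  have : Module.Projective R (N →₀ A) := .of_equiv (finsuppLEquivDirectSum R A N).symm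
  exact .of_split (s.restrictScalars R) ((Finsupp.linearCombination A id).restrictScalars R)
    (LinearMap.ext fun x => DFunLike.congr_fun hs x)

namespace ModuleCat

instance restrictScalars_preservesHomology {R S : Type*} [Ring R] [Ring S] (f : R →+* S) :
    (restrictScalars.{v} f).PreservesHomology :=
  Functor.preservesHomology_of_map_exact _ fun S hS => by
    rw [ShortComplex.ShortExact.moduleCat_exact_iff_function_exact] at hS ⊢
    exact hS

instance restrictScalars_preservesProjectiveObjects (R A : Type u) [CommRing R] [Ring A]
    [Algebra R A] [Module.Projective R A] :
    (restrictScalars.{u} (algebraMap R A)).PreservesProjectiveObjects where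
  projective_obj {X} hX := by
    have : IsScalarTower R A ((restrictScalars (algebraMap R A)).obj X) :=
      ⟨fun r a x => by rw [restrictScalars.smul_def, Algebra.smul_def, mul_smul]; rfl⟩
    have : Module.Projective A X := (IsProjective.iff_projective X).mpr hX
    have : Module.Projective A ((restrictScalars (algebraMap R A)).obj X) := this
    exact (IsProjective.iff_projective ((restrictScalars (algebraMap R A)).obj X)).mp
      (Module.Projective.trans R A ((restrictScalars (algebraMap R A)).obj X))

end ModuleCat

namespace CategoryTheory.Adjunction

variable {C D : Type*} [Category.{v} C] [Category.{v} D] [Abelian C] [Abelian D]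
  {F : C ⥤ D} {G : D ⥤ C} (adj : F ⊣ G)
  [F.Additive] [F.PreservesProjectiveObjects] [F.PreservesHomology]

noncomputable def linearYonedaObjMapProjectiveResolutionIso {X : C} (P : ProjectiveResolution X)
    (Y : D) :
    P.complex.linearYonedaObj ℤ (G.obj Y) ≅
      (F.mapProjectiveResolution P).complex.linearYonedaObj ℤ Y :=
  HomologicalComplex.Hom.isoOfComponents
    (fun i => (adj.homAddEquiv (P.complex.X i) Y).symm.toIntLinearEquiv.toModuleIso)
    (fun i j _ => by
      ext φ
      exact (adj.homEquiv_naturality_left_symm (P.complex.d j i) φ).symm)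

noncomputable def extIso [EnoughProjectives C] [EnoughProjectives D] (X : C) (Y : D) (n : ℕ) :
    ((Ext ℤ C n).obj (Opposite.op X)).obj (G.obj Y) ≅
      ((Ext ℤ D n).obj (Opposite.op (F.obj X))).obj Y :=
  let P := (HasProjectiveResolution.out (Z := X)).some
  P.isoExt n (G.obj Y) ≪≫
    (HomologicalComplex.homologyFunctor _ _ n).mapIso
      (adj.linearYonedaObjMapProjectiveResolutionIso P Y) ≪≫
    ((F.mapProjectiveResolution P).isoExt n Y).symm

end CategoryTheory.Adjunction

section Frobenius

variable {R A : Type u} [CommRing R] [Ring A] [Algebra R A]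

noncomputable def LinearMap.toCoextendScalars (ε : A →ₗ[R] R) :
    A →ₗ[A] ((ModuleCat.restrictScalars (algebraMap R A)).obj (ModuleCat.of A A) →ₗ[R] R) where
  toFun a :=
    { toFun (b : A) := ε (b * a)
      map_add' (b c : A) := show ε ((b + c) * a) = _ by rw [add_mul, map_add]
      map_smul' r (b : A) := show ε ((algebraMap R A r * b) * a) = r • ε (b * a) by
        rw [mul_assoc, ← Algebra.smul_def, map_smul] }
  map_add' a a' := by
    ext (b : A)
    exact show ε (b * (a + a')) = ε (b * a) + ε (b * a') by rw [mul_add, map_add]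
  map_smul' s a := by
    ext (b : A)
    exact show ε (b * (s * a)) = ε ((b * s) * a) by rw [mul_assoc]

lemma LinearMap.toCoextendScalars_apply (ε : A →ₗ[R] R) (a b : A) :
    ε.toCoextendScalars a b = ε (b * a) := rfl

end Frobenius

namespace MonoidAlgebra

variable (R : Type u) [CommRing R] (G : Type u) [Group G]

noncomputable def coeffOne : MonoidAlgebra R G →ₗ[R] R :=
  (Finsupp.lapply 1).comp (coeffLinearEquiv R).toLinearMap

lemma coeffOne_apply (a : MonoidAlgebra R G) : coeffOne R G a = a.coeff 1 := rfl

lemma map_single_eq_smul {N : Type*} [AddCommGroup N] [Module R N]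
    (φ : (ModuleCat.restrictScalars (algebraMap R (MonoidAlgebra R G))).obj
      (ModuleCat.of _ (MonoidAlgebra R G)) →ₗ[R] N) (g : G) (r : R) :
    φ (single g r) = r • φ (single g 1) := by
  have h : single g r = algebraMap R (MonoidAlgebra R G) r * single g 1 := by
    rw [← Algebra.smul_def, smul_single', mul_one]
  exact (congrArg φ h).trans (φ.map_smul r (single g 1))

theorem bijective_coeffOne_toCoextendScalars [Finite G] :
    Function.Bijective (coeffOne R G).toCoextendScalars := by
  refine ⟨(injective_iff_map_eq_zero _).mpr fun a ha => ?_, fun φ => ?_⟩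
  · ext g
    have h : (coeffOne R G).toCoextendScalars a (single g⁻¹ 1) = 0 := by rw [ha]; rfl
    rw [LinearMap.toCoextendScalars_apply, coeffOne_apply, coeff_single_mul_apply, inv_inv,
      mul_one, one_mul] at h
    simpa using h
  · refine ⟨ofCoeff (Finsupp.equivFunOnFinite.symm fun g => φ (single g⁻¹ 1)), ?_⟩
    ext (b : MonoidAlgebra R G)
    induction b using MonoidAlgebra.induction_linear with
    | zero => exact (map_zero _).trans (map_zero φ).symm
    | add b c hb hc =>
      exact (map_add _ b c).trans ((congrArg₂ _ hb hc).trans (map_add φ b c).symm)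
    | single g r =>
      rw [LinearMap.toCoextendScalars_apply, coeffOne_apply, coeff_single_mul_apply, mul_one,
        map_single_eq_smul]
      simp

noncomputable def isoCoextendScalars [Finite G] :
    ModuleCat.of (MonoidAlgebra R G) (MonoidAlgebra R G) ≅
      (ModuleCat.coextendScalars (algebraMap R (MonoidAlgebra R G))).obj (ModuleCat.of R R) :=
  ((LinearEquiv.ofBijective _ (bijective_coeffOne_toCoextendScalars R G)).trans
    (ModuleCat.CoextendScalars.equiv (algebraMap R (MonoidAlgebra R G))
      (ModuleCat.of R R)).symm).toModuleIso

end MonoidAlgebra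

/-- Let `R` be a commutative ring and `G` a finite group.  If `M` is an
`R[G]`-module whose underlying `R`-module (by restriction of scalars) is projective, then
`Ext¹_{R[G]}(M, R[G]) = 0`. -/
theorem statement6 (R : Type u) [CommRing R] (G : Type u) [Group G] [Finite G]
    (M : Type u) [AddCommGroup M] [Module R M] [Module (MonoidAlgebra R G) M]
    [IsScalarTower R (MonoidAlgebra R G) M] [Module.Projective R M] :
    Subsingleton
      (((_root_.Ext ℤ (ModuleCat.{u} (MonoidAlgebra R G)) 1).obj
        (Opposite.op (ModuleCat.of (MonoidAlgebra R G) M))).obj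
          (ModuleCat.of (MonoidAlgebra R G) (MonoidAlgebra R G))) := by
  let res := ModuleCat.restrictScalars.{u} (algebraMap R (MonoidAlgebra R G))
  let e : M ≃ₗ[R] res.obj (ModuleCat.of (MonoidAlgebra R G) M) :=
    { AddEquiv.refl M with map_smul' := fun r x => (algebraMap_smul (MonoidAlgebra R G) r x).symm }
  have : Projective (res.obj (ModuleCat.of (MonoidAlgebra R G) M)) :=
    Projective.of_iso e.toModuleIso inferInstance
  refine ModuleCat.isZero_iff_subsingleton.mp
    ((isZero_Ext_succ_of_projective (res.obj (ModuleCat.of (MonoidAlgebra R G) M))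
      (ModuleCat.of R R) 0).of_iso ?_)
  exact ((_root_.Ext ℤ _ 1).obj _).mapIso (MonoidAlgebra.isoCoextendScalars R G) ≪≫
    (ModuleCat.restrictCoextendScalarsAdj _).extIso _ _ 1
end
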